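/- Let 𝒵 ⊆ ℤ_{≥0}² be a downward-closed set contained in R_{a,b} = [0,a-1]×[0,b-1], let L ≥ 2, and let m, n > ab. Then γ^L(𝒵, m, n) does not depend on m and n: it equals γ^L(𝒵, m', n') for any m', n' > ab. -/
import Mathlib


open Finset
open scoped Classical

/-- The rectangle `R_{n,m} = [0,n-1] × [0,m-1]` as a finset; a point `(j,i)` has
`j < n` and `i < m`. -/
def rectF (n m : ℕ) : Finset (ℕ × ℕ) := Finset.range n ×ˢ Finset.range m

/-- One step of the neighborhood growth dynamics with zero-set `Z` on `R_{n,m}`. -/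
noncomputable def growthStep (Z : Set (ℕ × ℕ)) (n m : ℕ) (A : Finset (ℕ × ℕ)) : Finset (ℕ × ℕ) :=
  A ∪ (rectF n m).filter (fun p =>
    ((A.filter (fun q => q.2 = p.2 ∧ q.1 ≠ p.1)).card,
     (A.filter (fun q => q.1 = p.1 ∧ q.2 ≠ p.2)).card) ∉ Z)

/-- The Young domination number with latency `L` on `R_{n,m}`. -/
noncomputable def gammaL (Z : Set (ℕ × ℕ)) (L m n : ℕ) : ℕ :=
  sInf {k : ℕ | ∃ A : Finset (ℕ × ℕ), A ⊆ rectF n m ∧ A.card = k ∧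
    (growthStep Z n m)^[L] A = rectF n m}

/-! ### Basic helpers -/

noncomputable def colCt (A : Finset (ℕ × ℕ)) (i : ℕ) : ℕ := (A.filter (fun q => q.2 = i)).card
noncomputable def rowCt (A : Finset (ℕ × ℕ)) (j : ℕ) : ℕ := (A.filter (fun q => q.1 = j)).card

lemma mem_rectF {n m : ℕ} {p : ℕ × ℕ} : p ∈ rectF n m ↔ p.1 < n ∧ p.2 < m := by
  simp [rectF]

lemma filter_col_of_notMem {A : Finset (ℕ × ℕ)} {p : ℕ × ℕ} (h : p ∉ A) :
    A.filter (fun q => q.2 = p.2 ∧ q.1 ≠ p.1) = A.filter (fun q => q.2 = p.2) := by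
  apply Finset.filter_congr
  intro q hq
  constructor
  · rintro ⟨h2, _⟩; exact h2
  · intro h2
    refine ⟨h2, fun h1 => h ?_⟩
    have : q = p := Prod.ext h1 h2
    rwa [this] at hq

lemma filter_row_of_notMem {A : Finset (ℕ × ℕ)} {p : ℕ × ℕ} (h : p ∉ A) :
    A.filter (fun q => q.1 = p.1 ∧ q.2 ≠ p.2) = A.filter (fun q => q.1 = p.1) := by
  apply Finset.filter_congr
  intro q hq
  constructor
  · rintro ⟨h2, _⟩; exact h2
  · intro h1
    refine ⟨h1, fun h2 => h ?_⟩
    have : q = p := Prod.ext h1 h2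
    rwa [this] at hq

lemma mem_growthStep {Z : Set (ℕ × ℕ)} {n m : ℕ} {A : Finset (ℕ × ℕ)} {p : ℕ × ℕ} :
    p ∈ growthStep Z n m A ↔ p ∈ A ∨ (p ∈ rectF n m ∧
      ((A.filter (fun q => q.2 = p.2 ∧ q.1 ≠ p.1)).card,
       (A.filter (fun q => q.1 = p.1 ∧ q.2 ≠ p.2)).card) ∉ Z) := by
  simp [growthStep]

lemma mem_growthStep_of_notMem {Z : Set (ℕ × ℕ)} {n m : ℕ} {A : Finset (ℕ × ℕ)} {p : ℕ × ℕ}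
    (h : p ∉ A) :
    p ∈ growthStep Z n m A ↔ p ∈ rectF n m ∧ (colCt A p.2, rowCt A p.1) ∉ Z := by
  rw [mem_growthStep, filter_col_of_notMem h, filter_row_of_notMem h]
  simp only [colCt, rowCt]
  tauto

lemma subset_growthStep {Z : Set (ℕ × ℕ)} {n m : ℕ} {A : Finset (ℕ × ℕ)} :
    A ⊆ growthStep Z n m A := Finset.subset_union_left

lemma growthStep_subset_rect {Z : Set (ℕ × ℕ)} {n m : ℕ} {A : Finset (ℕ × ℕ)}
    (hA : A ⊆ rectF n m) : growthStep Z n m A ⊆ rectF n m :=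
  Finset.union_subset hA (Finset.filter_subset _ _)

lemma iterate_subset_rect {Z : Set (ℕ × ℕ)} {n m : ℕ} {A : Finset (ℕ × ℕ)}
    (hA : A ⊆ rectF n m) (t : ℕ) : (growthStep Z n m)^[t] A ⊆ rectF n m := by
  induction t with
  | zero => exact hA
  | succ t ih => rw [Function.iterate_succ_apply']; exact growthStep_subset_rect ih

lemma growthStep_rect {Z : Set (ℕ × ℕ)} {n m : ℕ} :
    growthStep Z n m (rectF n m) = rectF n m :=
  le_antisymm (growthStep_subset_rect le_rfl) subset_growthStep

lemma iterate_rect {Z : Set (ℕ × ℕ)} {n m : ℕ} (t : ℕ) :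
    (growthStep Z n m)^[t] (rectF n m) = rectF n m := by
  induction t with
  | zero => rfl
  | succ t ih => rw [Function.iterate_succ_apply', ih, growthStep_rect]

/-! ### Z-set helpers -/

section Zfacts
variable {Z : Set (ℕ × ℕ)} {a b : ℕ}

lemma Znot_left (hZab : Z ⊆ {p : ℕ × ℕ | p.1 < a ∧ p.2 < b}) {u v : ℕ} (h : a ≤ u) :
    (u, v) ∉ Z := fun hin => absurd (hZab hin).1 (not_lt.2 h)

lemma Znot_right (hZab : Z ⊆ {p : ℕ × ℕ | p.1 < a ∧ p.2 < b}) {u v : ℕ} (h : b ≤ v) :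
    (u, v) ∉ Z := fun hin => absurd (hZab hin).2 (not_lt.2 h)

lemma Zmono (hZdc : ∀ p ∈ Z, ∀ q : ℕ × ℕ, q.1 ≤ p.1 → q.2 ≤ p.2 → q ∈ Z)
    {u v u' v' : ℕ} (h : (u, v) ∉ Z) (hu : u ≤ u') (hv : v ≤ v') : (u', v') ∉ Z :=
  fun hin => h (hZdc _ hin (u, v) hu hv)

lemma Ziff (hZab : Z ⊆ {p : ℕ × ℕ | p.1 < a ∧ p.2 < b}) {u v u' v' : ℕ}
    (hu : u = u' ∨ (a ≤ u ∧ a ≤ u')) (hv : v = v' ∨ (b ≤ v ∧ b ≤ v')) :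
    ((u, v) ∈ Z ↔ (u', v') ∈ Z) := by
  rcases hu with rfl | ⟨h1, h2⟩
  · rcases hv with rfl | ⟨h1, h2⟩
    · rfl
    · simp [Znot_right hZab h1, Znot_right hZab h2]
  · simp [Znot_left hZab h1, Znot_left hZab h2]

end Zfacts

/-! ### Equivariance under coordinate permutations -/

noncomputable def pairEmb (σ τ : Equiv.Perm ℕ) : ℕ × ℕ ↪ ℕ × ℕ :=
  (Equiv.prodCongr σ τ).toEmbedding

@[simp] lemma pairEmb_apply (σ τ : Equiv.Perm ℕ) (p : ℕ × ℕ) :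
    pairEmb σ τ p = (σ p.1, τ p.2) := rfl

lemma map_pairEmb_rect {σ τ : Equiv.Perm ℕ} {n m : ℕ}
    (hσ : ∀ x, σ x < n ↔ x < n) (hτ : ∀ x, τ x < m ↔ x < m) :
    (rectF n m).map (pairEmb σ τ) = rectF n m := by
  ext p
  simp only [Finset.mem_map, mem_rectF, pairEmb_apply]
  constructor
  · rintro ⟨q, ⟨hq1, hq2⟩, rfl⟩
    exact ⟨(hσ _).2 hq1, (hτ _).2 hq2⟩
  · rintro ⟨h1, h2⟩
    refine ⟨(σ.symm p.1, τ.symm p.2), ⟨?_, ?_⟩, ?_⟩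
    · rw [← hσ]; simpa using h1
    · rw [← hτ]; simpa using h2
    · simp

lemma growthStep_map {Z : Set (ℕ × ℕ)} {σ τ : Equiv.Perm ℕ} {n m : ℕ}
    (hσ : ∀ x, σ x < n ↔ x < n) (hτ : ∀ x, τ x < m ↔ x < m) (A : Finset (ℕ × ℕ)) :
    growthStep Z n m (A.map (pairEmb σ τ)) = (growthStep Z n m A).map (pairEmb σ τ) := by
  unfold growthStep
  rw [Finset.map_union]
  congr 1
  conv_lhs => rw [← map_pairEmb_rect hσ hτ]
  rw [Finset.filter_map]
  congr 1
  apply Finset.filter_congr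
  intro p _
  simp only [Function.comp]
  have hcol : (Finset.filter (fun q => q.2 = (pairEmb σ τ p).2 ∧ q.1 ≠ (pairEmb σ τ p).1)
      (A.map (pairEmb σ τ))) =
      (A.filter (fun q => q.2 = p.2 ∧ q.1 ≠ p.1)).map (pairEmb σ τ) := by
    rw [Finset.filter_map]
    congr 1
    apply Finset.filter_congr
    intro q _
    simp only [Function.comp, pairEmb_apply]
    constructor
    · rintro ⟨h1, h2⟩
      exact ⟨τ.injective h1, fun h => h2 (by rw [h])⟩
    · rintro ⟨h1, h2⟩
      exact ⟨by rw [h1], fun h => h2 (σ.injective h)⟩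
  have hrow : (Finset.filter (fun q => q.1 = (pairEmb σ τ p).1 ∧ q.2 ≠ (pairEmb σ τ p).2)
      (A.map (pairEmb σ τ))) =
      (A.filter (fun q => q.1 = p.1 ∧ q.2 ≠ p.2)).map (pairEmb σ τ) := by
    rw [Finset.filter_map]
    congr 1
    apply Finset.filter_congr
    intro q _
    simp only [Function.comp, pairEmb_apply]
    constructor
    · rintro ⟨h1, h2⟩
      exact ⟨σ.injective h1, fun h => h2 (by rw [h])⟩
    · rintro ⟨h1, h2⟩
      exact ⟨by rw [h1], fun h => h2 (τ.injective h)⟩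
  rw [hcol, hrow, Finset.card_map, Finset.card_map]

lemma iterate_growthStep_map {Z : Set (ℕ × ℕ)} {σ τ : Equiv.Perm ℕ} {n m : ℕ}
    (hσ : ∀ x, σ x < n ↔ x < n) (hτ : ∀ x, τ x < m ↔ x < m) (A : Finset (ℕ × ℕ)) (t : ℕ) :
    (growthStep Z n m)^[t] (A.map (pairEmb σ τ)) = ((growthStep Z n m)^[t] A).map (pairEmb σ τ) := by
  induction t with
  | zero => rfl
  | succ t ih =>
      rw [Function.iterate_succ_apply', Function.iterate_succ_apply', ih,
        growthStep_map hσ hτ]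

lemma span_map_iff {Z : Set (ℕ × ℕ)} {σ τ : Equiv.Perm ℕ} {n m : ℕ}
    (hσ : ∀ x, σ x < n ↔ x < n) (hτ : ∀ x, τ x < m ↔ x < m) (A : Finset (ℕ × ℕ)) (t : ℕ) :
    (growthStep Z n m)^[t] (A.map (pairEmb σ τ)) = rectF n m ↔
      (growthStep Z n m)^[t] A = rectF n m := by
  rw [iterate_growthStep_map hσ hτ]
  constructor
  · intro h
    apply Finset.map_injective (pairEmb σ τ)
    rw [h, map_pairEmb_rect hσ hτ]
  · intro h
    rw [h, map_pairEmb_rect hσ hτ]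

/-! ### Existence of a suitable permutation -/

lemma swap_lt_iff {u y n : ℕ} (hu : u < n) (hy : y < n) (w : ℕ) :
    (Equiv.swap u y) w < n ↔ w < n := by
  rcases eq_or_ne w u with rfl | h1
  · simp [hu, hy]
  rcases eq_or_ne w y with rfl | h2
  · simp [hu, hy]
  · rw [Equiv.swap_apply_of_ne_of_ne h1 h2]

lemma exists_perm_into (n : ℕ) : ∀ (k : ℕ) (s t : Finset ℕ), s.card = k → t.card = k →
    s ⊆ Finset.range n → t ⊆ Finset.range n →
    ∃ σ : Equiv.Perm ℕ, (∀ x ∈ s, σ x ∈ t) ∧ (∀ x, σ x < n ↔ x < n) := by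
  intro k
  induction k with
  | zero =>
      intro s t hs ht _ _
      refine ⟨Equiv.refl ℕ, ?_, by simp⟩
      intro x hx
      rw [Finset.card_eq_zero] at hs
      simp [hs] at hx
  | succ k ih =>
      intro s t hs ht hsn htn
      have hsne : s.Nonempty := Finset.card_pos.1 (by omega)
      have htne : t.Nonempty := Finset.card_pos.1 (by omega)
      obtain ⟨x, hx⟩ := hsne
      obtain ⟨y, hy⟩ := htne
      obtain ⟨σ', hσ'1, hσ'2⟩ := ih (s.erase x) (t.erase y)
        (by rw [Finset.card_erase_of_mem hx, hs]; omega)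
        (by rw [Finset.card_erase_of_mem hy, ht]; omega)
        ((Finset.erase_subset _ _).trans hsn)
        ((Finset.erase_subset _ _).trans htn)
      refine ⟨σ'.trans (Equiv.swap (σ' x) y), ?_, ?_⟩
      · intro z hz
        rcases eq_or_ne z x with rfl | hzx
        · simp only [Equiv.trans_apply, Equiv.swap_apply_left]
          exact hy
        · have hz' : z ∈ s.erase x := Finset.mem_erase.2 ⟨hzx, hz⟩
          have h1 : σ' z ∈ t.erase y := hσ'1 z hz'
          have h2 : σ' z ≠ y := Finset.ne_of_mem_erase h1
          have h3 : σ' z ≠ σ' x := fun h => hzx (σ'.injective h)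
          simp only [Equiv.trans_apply, Equiv.swap_apply_of_ne_of_ne h3 h2]
          exact Finset.mem_of_mem_erase h1
      · intro w
        have hxn : x < n := Finset.mem_range.1 (hsn hx)
        have hyn : y < n := Finset.mem_range.1 (htn hy)
        have hσxn : σ' x < n := (hσ'2 x).2 hxn
        simp only [Equiv.trans_apply]
        rw [swap_lt_iff hσxn hyn, hσ'2]

/-! ### The block `[0,a) × [0,b)` spans in two steps -/

section Block
variable {Z : Set (ℕ × ℕ)} {a b n m : ℕ}

lemma block_step1 (hZab : Z ⊆ {p : ℕ × ℕ | p.1 < a ∧ p.2 < b})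
    (hn : a ≤ n) (hm : b ≤ m) {j i : ℕ} (hj : j < a) (hi : i < m) :
    (j, i) ∈ growthStep Z n m (rectF a b) := by
  by_cases hib : i < b
  · exact subset_growthStep (mem_rectF.2 ⟨hj, hib⟩)
  · have hnotmem : (j, i) ∉ rectF a b := by
      simp [mem_rectF, hib]
    rw [mem_growthStep_of_notMem hnotmem]
    refine ⟨mem_rectF.2 ⟨lt_of_lt_of_le hj hn, hi⟩, ?_⟩
    have hcol : colCt (rectF a b) i = 0 := by
      unfold colCt
      rw [Finset.card_eq_zero, Finset.filter_eq_empty_iff]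
      intro q hq
      have := (mem_rectF.1 hq).2
      omega
    have hrow : rowCt (rectF a b) j = b := by
      unfold rowCt
      have : (rectF a b).filter (fun q => q.1 = j) = {j} ×ˢ Finset.range b := by
        ext q
        simp only [Finset.mem_filter, mem_rectF, Finset.mem_product, Finset.mem_singleton,
          Finset.mem_range]
        constructor
        · rintro ⟨⟨_, h2⟩, h3⟩; exact ⟨h3, h2⟩
        · rintro ⟨h1, h2⟩; exact ⟨⟨h1 ▸ hj, h2⟩, h1⟩
      rw [this]
      simp
    rw [hcol, hrow]
    exact Znot_right hZab le_rfl

lemma block_spans (hZab : Z ⊆ {p : ℕ × ℕ | p.1 < a ∧ p.2 < b})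
    (ha : 1 ≤ a) (hn : a ≤ n) (hm : b ≤ m) {L : ℕ} (hL : 2 ≤ L) :
    (growthStep Z n m)^[L] (rectF a b) = rectF n m := by
  have hblock : rectF a b ⊆ rectF n m := by
    intro q hq
    rw [mem_rectF] at hq ⊢
    exact ⟨lt_of_lt_of_le hq.1 hn, lt_of_lt_of_le hq.2 (le_trans (by omega) hm)⟩
  have h2 : (growthStep Z n m)^[2] (rectF a b) = rectF n m := by
    apply le_antisymm
    · exact iterate_subset_rect hblock 2
    · intro p hp
      show p ∈ growthStep Z n m (growthStep Z n m (rectF a b))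
      set B := growthStep Z n m (rectF a b) with hB
      by_cases hpB : p ∈ B
      · exact subset_growthStep hpB
      · rw [mem_growthStep_of_notMem hpB]
        refine ⟨hp, ?_⟩
        have hcol : a ≤ colCt B p.2 := by
          have himg : (Finset.range a).image (fun k => (k, p.2)) ⊆
              B.filter (fun q => q.2 = p.2) := by
            intro q hq
            simp only [Finset.mem_image, Finset.mem_range] at hq
            obtain ⟨k, hk, rfl⟩ := hq
            exact Finset.mem_filter.2 ⟨block_step1 hZab hn hm hk (mem_rectF.1 hp).2, rfl⟩
          have hcard : ((Finset.range a).image (fun k => (k, p.2))).card = a := by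
            rw [Finset.card_image_of_injective _ (fun x y hxy => (Prod.ext_iff.1 hxy).1)]
            simp
          calc a = _ := hcard.symm
            _ ≤ _ := Finset.card_le_card himg
        exact Znot_left hZab hcol
  obtain ⟨L', rfl⟩ : ∃ L', L = L' + 2 := ⟨L - 2, by omega⟩
  rw [Function.iterate_add_apply, h2, iterate_rect]

end Block

/-! ### gammaL basics -/

section GammaBasics
variable {Z : Set (ℕ × ℕ)} {L m n : ℕ}

lemma gammaL_nonempty :
    {k : ℕ | ∃ A : Finset (ℕ × ℕ), A ⊆ rectF n m ∧ A.card = k ∧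
      (growthStep Z n m)^[L] A = rectF n m}.Nonempty :=
  ⟨(rectF n m).card, rectF n m, le_rfl, rfl, iterate_rect L⟩

lemma gammaL_spec : ∃ A : Finset (ℕ × ℕ), A ⊆ rectF n m ∧ A.card = gammaL Z L m n ∧
    (growthStep Z n m)^[L] A = rectF n m :=
  Nat.sInf_mem (gammaL_nonempty (Z := Z) (L := L) (m := m) (n := n))

lemma gammaL_le {A : Finset (ℕ × ℕ)} (hA : A ⊆ rectF n m)
    (hspan : (growthStep Z n m)^[L] A = rectF n m) : gammaL Z L m n ≤ A.card :=
  Nat.sInf_le ⟨A, hA, rfl, hspan⟩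

lemma gammaL_eq_zero_of_empty (hZ : Z = ∅) (hL : 1 ≤ L) : gammaL Z L m n = 0 := by
  have h1 : growthStep Z n m (∅ : Finset (ℕ × ℕ)) = rectF n m := by
    apply le_antisymm (growthStep_subset_rect (Finset.empty_subset _))
    intro p hp
    rw [mem_growthStep]
    right
    exact ⟨hp, by simp [hZ]⟩
  have : (growthStep Z n m)^[L] (∅ : Finset (ℕ × ℕ)) = rectF n m := by
    obtain ⟨L', rfl⟩ : ∃ L', L = L' + 1 := ⟨L - 1, by omega⟩
    rw [Function.iterate_add_apply]
    simp only [Function.iterate_one, h1]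
    exact iterate_rect L'
  have := gammaL_le (Finset.empty_subset _) this
  simpa using this

end GammaBasics

/-! ### The Ψ coupling: dynamics on a big rectangle is a blow-up of dynamics on
`R_{c+1,c+1}`, for seeds inside the core `[0,c)²`. -/

noncomputable def psiF (n m c : ℕ) (C : Finset (ℕ × ℕ)) : Finset (ℕ × ℕ) :=
  (rectF n m).filter (fun p => (min p.1 c, min p.2 c) ∈ C)

def DomC (c : ℕ) (C : Finset (ℕ × ℕ)) : Prop :=
  (∀ i j, (c, i) ∈ C → j ≤ c → (j, i) ∈ C) ∧ (∀ j i, (j, c) ∈ C → i ≤ c → (j, i) ∈ C)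

lemma mem_psiF {n m c : ℕ} {C : Finset (ℕ × ℕ)} {p : ℕ × ℕ} :
    p ∈ psiF n m c C ↔ p ∈ rectF n m ∧ (min p.1 c, min p.2 c) ∈ C := Finset.mem_filter

lemma psiF_subset_rect {n m c : ℕ} {C : Finset (ℕ × ℕ)} : psiF n m c C ⊆ rectF n m :=
  Finset.filter_subset _ _

section Psi
variable {c n m : ℕ} {C : Finset (ℕ × ℕ)}

lemma colCt_psi_eq (hC : C ⊆ rectF (c + 1) (c + 1)) {i : ℕ}
    (h : (c, min i c) ∉ C) (hcn : c < n) (hi : i < m) :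
    colCt (psiF n m c C) i = colCt C (min i c) := by
  unfold colCt
  refine (Finset.card_bij (fun q _ => (q.1, i)) ?_ ?_ ?_).symm
  · intro q hq
    beta_reduce
    obtain ⟨hqC, hq2⟩ := Finset.mem_filter.1 hq
    have hq1 : q.1 < c + 1 := (mem_rectF.1 (hC hqC)).1
    have hq1c : q.1 ≠ c := by
      intro he
      apply h
      have : q = (c, min i c) := Prod.ext he hq2
      rwa [this] at hqC
    refine Finset.mem_filter.2 ⟨mem_psiF.2 ⟨mem_rectF.2 ⟨by omega, hi⟩, ?_⟩, rfl⟩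
    have : min q.1 c = q.1 := by omega
    rw [this]
    show (q.1, min i c) ∈ C
    have : (q.1, min i c) = q := Prod.ext rfl hq2.symm
    rwa [this]
  · intro q1 h1 q2 h2 he
    have e1 : q1.1 = q2.1 := (Prod.ext_iff.1 he).1
    have e2 : q1.2 = q2.2 := by
      rw [(Finset.mem_filter.1 h1).2, (Finset.mem_filter.1 h2).2]
    exact Prod.ext e1 e2
  · intro r hr
    obtain ⟨hrP, hr2⟩ := Finset.mem_filter.1 hr
    obtain ⟨hrRect, hrC⟩ := mem_psiF.1 hrP
    have hr1 : r.1 < c := by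
      by_contra hge
      apply h
      have : min r.1 c = c := by omega
      rw [this, hr2] at hrC
      exact hrC
    refine ⟨(r.1, min i c), Finset.mem_filter.2 ⟨?_, rfl⟩, Prod.ext rfl hr2.symm⟩
    have e : min r.1 c = r.1 := by omega
    rw [e, hr2] at hrC
    exact hrC

lemma rowCt_psi_eq (hC : C ⊆ rectF (c + 1) (c + 1)) {j : ℕ}
    (h : (min j c, c) ∉ C) (hcm : c < m) (hj : j < n) :
    rowCt (psiF n m c C) j = rowCt C (min j c) := by
  unfold rowCt
  refine (Finset.card_bij (fun q _ => (j, q.2)) ?_ ?_ ?_).symm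
  · intro q hq
    beta_reduce
    obtain ⟨hqC, hq1⟩ := Finset.mem_filter.1 hq
    have hq2 : q.2 < c + 1 := (mem_rectF.1 (hC hqC)).2
    have hq2c : q.2 ≠ c := by
      intro he
      apply h
      have : q = (min j c, c) := Prod.ext hq1 he
      rwa [this] at hqC
    refine Finset.mem_filter.2 ⟨mem_psiF.2 ⟨mem_rectF.2 ⟨hj, by omega⟩, ?_⟩, rfl⟩
    have : min q.2 c = q.2 := by omega
    rw [this]
    show (min j c, q.2) ∈ C
    have : (min j c, q.2) = q := Prod.ext hq1.symm rfl
    rwa [this]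
  · intro q1 h1 q2 h2 he
    have e2 : q1.2 = q2.2 := (Prod.ext_iff.1 he).2
    have e1 : q1.1 = q2.1 := by
      rw [(Finset.mem_filter.1 h1).2, (Finset.mem_filter.1 h2).2]
    exact Prod.ext e1 e2
  · intro r hr
    obtain ⟨hrP, hr1⟩ := Finset.mem_filter.1 hr
    obtain ⟨hrRect, hrC⟩ := mem_psiF.1 hrP
    have hr2 : r.2 < c := by
      by_contra hge
      apply h
      have : min r.2 c = c := by omega
      rw [hr1, this] at hrC
      exact hrC
    refine ⟨(min j c, r.2), Finset.mem_filter.2 ⟨?_, rfl⟩, Prod.ext hr1.symm rfl⟩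
    have e : min r.2 c = r.2 := by omega
    rw [hr1, e] at hrC
    exact hrC

lemma colCt_psi_sat (hD : DomC c C) {i : ℕ}
    (h : (c, min i c) ∈ C) (hcn : c < n) (hi : i < m) :
    c ≤ colCt (psiF n m c C) i ∧ c ≤ colCt C (min i c) := by
  have hinj : ∀ x : ℕ, Function.Injective (fun k : ℕ => (k, x)) :=
    fun x k1 k2 he => (Prod.ext_iff.1 he).1
  constructor
  · have himg : (Finset.range c).image (fun k => (k, i)) ⊆
        (psiF n m c C).filter (fun q => q.2 = i) := by
      intro q hq
      obtain ⟨k, hk, rfl⟩ := Finset.mem_image.1 hq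
      rw [Finset.mem_range] at hk
      refine Finset.mem_filter.2 ⟨mem_psiF.2 ⟨mem_rectF.2 ⟨by omega, hi⟩, ?_⟩, rfl⟩
      have : min k c = k := by omega
      rw [this]
      exact hD.1 (min i c) k h (by omega)
    calc c = ((Finset.range c).image (fun k => (k, i))).card := by
            rw [Finset.card_image_of_injective _ (hinj i)]; simp
      _ ≤ _ := Finset.card_le_card himg
  · have himg : (Finset.range c).image (fun k => (k, min i c)) ⊆
        C.filter (fun q => q.2 = min i c) := by
      intro q hq
      obtain ⟨k, hk, rfl⟩ := Finset.mem_image.1 hq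
      rw [Finset.mem_range] at hk
      exact Finset.mem_filter.2 ⟨hD.1 (min i c) k h (by omega), rfl⟩
    calc c = ((Finset.range c).image (fun k => (k, min i c))).card := by
            rw [Finset.card_image_of_injective _ (hinj (min i c))]; simp
      _ ≤ _ := Finset.card_le_card himg

lemma rowCt_psi_sat (hD : DomC c C) {j : ℕ}
    (h : (min j c, c) ∈ C) (hcm : c < m) (hj : j < n) :
    c ≤ rowCt (psiF n m c C) j ∧ c ≤ rowCt C (min j c) := by
  have hinj : ∀ x : ℕ, Function.Injective (fun k : ℕ => (x, k)) :=
    fun x k1 k2 he => (Prod.ext_iff.1 he).2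
  constructor
  · have himg : (Finset.range c).image (fun k => (j, k)) ⊆
        (psiF n m c C).filter (fun q => q.1 = j) := by
      intro q hq
      obtain ⟨k, hk, rfl⟩ := Finset.mem_image.1 hq
      rw [Finset.mem_range] at hk
      refine Finset.mem_filter.2 ⟨mem_psiF.2 ⟨mem_rectF.2 ⟨hj, by omega⟩, ?_⟩, rfl⟩
      have : min k c = k := by omega
      rw [this]
      exact hD.2 (min j c) k h (by omega)
    calc c = ((Finset.range c).image (fun k => (j, k))).card := by
            rw [Finset.card_image_of_injective _ (hinj j)]; simp
      _ ≤ _ := Finset.card_le_card himg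
  · have himg : (Finset.range c).image (fun k => (min j c, k)) ⊆
        C.filter (fun q => q.1 = min j c) := by
      intro q hq
      obtain ⟨k, hk, rfl⟩ := Finset.mem_image.1 hq
      rw [Finset.mem_range] at hk
      exact Finset.mem_filter.2 ⟨hD.2 (min j c) k h (by omega), rfl⟩
    calc c = ((Finset.range c).image (fun k => (min j c, k))).card := by
            rw [Finset.card_image_of_injective _ (hinj (min j c))]; simp
      _ ≤ _ := Finset.card_le_card himg

end Psi

section PsiStep
variable {Z : Set (ℕ × ℕ)} {a b c n m : ℕ} {C : Finset (ℕ × ℕ)}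

lemma growthStep_psi (hZab : Z ⊆ {p : ℕ × ℕ | p.1 < a ∧ p.2 < b})
    (hac : a ≤ c) (hbc : b ≤ c)
    (hC : C ⊆ rectF (c + 1) (c + 1)) (hD : DomC c C) (hcn : c < n) (hcm : c < m) :
    growthStep Z n m (psiF n m c C) = psiF n m c (growthStep Z (c + 1) (c + 1) C) := by
  ext p
  by_cases hp : p ∈ rectF n m
  · have hp' : (min p.1 c, min p.2 c) ∈ rectF (c + 1) (c + 1) :=
      mem_rectF.2 ⟨by omega, by omega⟩
    by_cases hpc : (min p.1 c, min p.2 c) ∈ C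
    · have h1 : p ∈ growthStep Z n m (psiF n m c C) :=
        subset_growthStep (mem_psiF.2 ⟨hp, hpc⟩)
      have h2 : p ∈ psiF n m c (growthStep Z (c + 1) (c + 1) C) :=
        mem_psiF.2 ⟨hp, subset_growthStep hpc⟩
      simp [h1, h2]
    · have hnp : p ∉ psiF n m c C := fun h => hpc (mem_psiF.1 h).2
      rw [mem_growthStep_of_notMem hnp, mem_psiF,
        mem_growthStep_of_notMem hpc]
      have hiff : ((colCt (psiF n m c C) p.2, rowCt (psiF n m c C) p.1) ∈ Z ↔
          (colCt C (min p.2 c), rowCt C (min p.1 c)) ∈ Z) := by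
        apply Ziff hZab
        · by_cases hsat : (c, min p.2 c) ∈ C
          · obtain ⟨s1, s2⟩ := colCt_psi_sat hD hsat hcn (mem_rectF.1 hp).2
            exact Or.inr ⟨le_trans hac s1, le_trans hac s2⟩
          · exact Or.inl (colCt_psi_eq hC hsat hcn (mem_rectF.1 hp).2)
        · by_cases hsat : (min p.1 c, c) ∈ C
          · obtain ⟨s1, s2⟩ := rowCt_psi_sat hD hsat hcm (mem_rectF.1 hp).1
            exact Or.inr ⟨le_trans hbc s1, le_trans hbc s2⟩
          · exact Or.inl (rowCt_psi_eq hC hsat hcm (mem_rectF.1 hp).1)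
      constructor
      · rintro ⟨_, hz⟩
        exact ⟨hp, ⟨hp', fun hin => hz (hiff.2 hin)⟩⟩
      · rintro ⟨_, _, hz⟩
        exact ⟨hp, fun hin => hz (hiff.1 hin)⟩
  · have h1 : p ∉ growthStep Z n m (psiF n m c C) :=
      fun h => hp (growthStep_subset_rect psiF_subset_rect h)
    have h2 : p ∉ psiF n m c (growthStep Z (c + 1) (c + 1) C) :=
      fun h => hp (psiF_subset_rect h)
    simp [h1, h2]

lemma rowCt_le_of_dom (hD : DomC c C) {j : ℕ} (hj : j ≤ c) :
    rowCt C c ≤ rowCt C j := by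
  unfold rowCt
  apply Finset.card_le_card_of_injOn (fun q => (j, q.2))
  · intro q hq
    obtain ⟨hqC, hq1⟩ := Finset.mem_filter.1 hq
    refine Finset.mem_filter.2 ⟨?_, rfl⟩
    apply hD.1 q.2 j _ hj
    have : (c, q.2) = q := Prod.ext hq1.symm rfl
    rwa [this]
  · intro q1 h1 q2 h2 he
    rw [Finset.mem_coe, Finset.mem_filter] at h1 h2
    exact Prod.ext (h1.2.trans h2.2.symm) (Prod.ext_iff.1 he).2

lemma colCt_le_of_dom (hD : DomC c C) {i : ℕ} (hi : i ≤ c) :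
    colCt C c ≤ colCt C i := by
  unfold colCt
  apply Finset.card_le_card_of_injOn (fun q => (q.1, i))
  · intro q hq
    obtain ⟨hqC, hq2⟩ := Finset.mem_filter.1 hq
    refine Finset.mem_filter.2 ⟨?_, rfl⟩
    apply hD.2 q.1 i _ hi
    have : (q.1, c) = q := Prod.ext rfl hq2.symm
    rwa [this]
  · intro q1 h1 q2 h2 he
    rw [Finset.mem_coe, Finset.mem_filter] at h1 h2
    exact Prod.ext (Prod.ext_iff.1 he).1 (h1.2.trans h2.2.symm)

lemma domC_growthStep (hZdc : ∀ p ∈ Z, ∀ q : ℕ × ℕ, q.1 ≤ p.1 → q.2 ≤ p.2 → q ∈ Z)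
    (hC : C ⊆ rectF (c + 1) (c + 1)) (hD : DomC c C) :
    DomC c (growthStep Z (c + 1) (c + 1) C) := by
  constructor
  · intro i j h1 hj
    by_cases hcmem : (c, i) ∈ C
    · exact subset_growthStep (hD.1 i j hcmem hj)
    · rw [mem_growthStep_of_notMem hcmem] at h1
      obtain ⟨hrect, hz⟩ := h1
      by_cases hji : (j, i) ∈ C
      · exact subset_growthStep hji
      · rw [mem_growthStep_of_notMem hji]
        refine ⟨mem_rectF.2 ⟨by omega, (mem_rectF.1 hrect).2⟩, ?_⟩
        exact Zmono hZdc hz le_rfl (rowCt_le_of_dom hD hj)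
  · intro j i h1 hi
    by_cases hcmem : (j, c) ∈ C
    · exact subset_growthStep (hD.2 j i hcmem hi)
    · rw [mem_growthStep_of_notMem hcmem] at h1
      obtain ⟨hrect, hz⟩ := h1
      by_cases hji : (j, i) ∈ C
      · exact subset_growthStep hji
      · rw [mem_growthStep_of_notMem hji]
        refine ⟨mem_rectF.2 ⟨(mem_rectF.1 hrect).1, by omega⟩, ?_⟩
        exact Zmono hZdc hz (colCt_le_of_dom hD hi) le_rfl

lemma psi_id {A : Finset (ℕ × ℕ)} (hA : A ⊆ rectF c c) (hcn : c < n) (hcm : c < m) :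
    psiF n m c A = A := by
  ext q
  rw [mem_psiF]
  constructor
  · rintro ⟨_, hq⟩
    have h1 : min q.1 c < c := (mem_rectF.1 (hA hq)).1
    have h2 : min q.2 c < c := (mem_rectF.1 (hA hq)).2
    have e1 : min q.1 c = q.1 := by omega
    have e2 : min q.2 c = q.2 := by omega
    rwa [e1, e2] at hq
  · intro hq
    have h1 := (mem_rectF.1 (hA hq)).1
    have h2 := (mem_rectF.1 (hA hq)).2
    have e1 : min q.1 c = q.1 := by omega
    have e2 : min q.2 c = q.2 := by omega
    refine ⟨mem_rectF.2 ⟨by omega, by omega⟩, ?_⟩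
    rw [e1, e2]
    exact hq

lemma psi_full_iff (hC : C ⊆ rectF (c + 1) (c + 1)) (hcn : c < n) (hcm : c < m) :
    psiF n m c C = rectF n m ↔ C = rectF (c + 1) (c + 1) := by
  constructor
  · intro h
    apply le_antisymm hC
    intro q hq
    have h1 := (mem_rectF.1 hq).1
    have h2 := (mem_rectF.1 hq).2
    have hqr : q ∈ rectF n m := mem_rectF.2 ⟨by omega, by omega⟩
    rw [← h] at hqr
    obtain ⟨_, hmem⟩ := mem_psiF.1 hqr
    have e1 : min q.1 c = q.1 := by omega
    have e2 : min q.2 c = q.2 := by omega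
    rwa [e1, e2] at hmem
  · intro h
    apply le_antisymm psiF_subset_rect
    intro p hp
    refine mem_psiF.2 ⟨hp, ?_⟩
    rw [h]
    exact mem_rectF.2 ⟨by omega, by omega⟩

lemma psi_span_iff (hZab : Z ⊆ {p : ℕ × ℕ | p.1 < a ∧ p.2 < b})
    (hZdc : ∀ p ∈ Z, ∀ q : ℕ × ℕ, q.1 ≤ p.1 → q.2 ≤ p.2 → q ∈ Z)
    (hac : a ≤ c) (hbc : b ≤ c) {A : Finset (ℕ × ℕ)} (hA : A ⊆ rectF c c)
    (hcn : c < n) (hcm : c < m) (L : ℕ) :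
    (growthStep Z n m)^[L] A = rectF n m ↔
      (growthStep Z (c + 1) (c + 1))^[L] A = rectF (c + 1) (c + 1) := by
  have hAc : A ⊆ rectF (c + 1) (c + 1) := by
    intro q hq
    have := mem_rectF.1 (hA hq)
    exact mem_rectF.2 ⟨by omega, by omega⟩
  have hDA : DomC c A := by
    constructor
    · intro i j h1 _
      have := (mem_rectF.1 (hA h1)).1
      omega
    · intro j i h1 _
      have := (mem_rectF.1 (hA h1)).2
      omega
  have key : ∀ t : ℕ,
      ((growthStep Z (c + 1) (c + 1))^[t] A ⊆ rectF (c + 1) (c + 1)) ∧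
      DomC c ((growthStep Z (c + 1) (c + 1))^[t] A) ∧
      (growthStep Z n m)^[t] A = psiF n m c ((growthStep Z (c + 1) (c + 1))^[t] A) := by
    intro t
    induction t with
    | zero => exact ⟨hAc, hDA, (psi_id hA hcn hcm).symm⟩
    | succ t ih =>
        obtain ⟨ih1, ih2, ih3⟩ := ih
        refine ⟨?_, ?_, ?_⟩
        · rw [Function.iterate_succ_apply']
          exact growthStep_subset_rect ih1
        · rw [Function.iterate_succ_apply']
          exact domC_growthStep hZdc ih1 ih2
        · rw [Function.iterate_succ_apply', Function.iterate_succ_apply', ih3,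
            growthStep_psi hZab hac hbc ih1 ih2 hcn hcm]
  rw [(key L).2.2]
  exact psi_full_iff (key L).1 hcn hcm

end PsiStep

/-! ### Main comparison lemma -/

lemma gamma_mono (Z : Set (ℕ × ℕ))
    (hZdc : ∀ p ∈ Z, ∀ q : ℕ × ℕ, q.1 ≤ p.1 → q.2 ≤ p.2 → q ∈ Z)
    (a b : ℕ) (hZab : Z ⊆ {p : ℕ × ℕ | p.1 < a ∧ p.2 < b})
    (L : ℕ) (hL : 2 ≤ L)
    (m n m' n' : ℕ) (hm : a * b < m) (hn : a * b < n)
    (hm' : a * b < m') (hn' : a * b < n') :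
    gammaL Z L m' n' ≤ gammaL Z L m n := by
  rcases Nat.eq_zero_or_pos (a * b) with hab | hab
  · have hZempty : Z = ∅ := by
      rw [Set.eq_empty_iff_forall_notMem]
      intro p hp
      have := hZab hp
      simp only [Set.mem_setOf_eq] at this
      rcases Nat.mul_eq_zero.1 hab with h | h <;> omega
    rw [gammaL_eq_zero_of_empty hZempty (by omega)]
    exact Nat.zero_le _
  · have ha : 1 ≤ a := by
      by_contra h
      have : a = 0 := by omega
      rw [this, Nat.zero_mul] at hab
      omega
    have hb : 1 ≤ b := by
      by_contra h
      have : b = 0 := by omega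
      rw [this, Nat.mul_zero] at hab
      omega
    obtain ⟨A, hAr, hAcard, hAspan⟩ := gammaL_spec (Z := Z) (L := L) (m := m) (n := n)
    set c := a * b with hc
    by_cases hk : c ≤ A.card
    · -- use the block [0,a)×[0,b)
      have hsub : rectF a b ⊆ rectF n' m' := by
        intro q hq
        have := mem_rectF.1 hq
        have h1 : a ≤ c := Nat.le_mul_of_pos_right a hb
        have h2 : b ≤ c := Nat.le_mul_of_pos_left b ha
        exact mem_rectF.2 ⟨by omega, by omega⟩
      have hblock := block_spans (n := n') (m := m') hZab ha
        (by have : a ≤ c := Nat.le_mul_of_pos_right a hb; omega)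
        (by have : b ≤ c := Nat.le_mul_of_pos_left b ha; omega) hL
      have hle := gammaL_le hsub hblock
      have hcard : (rectF a b).card = c := by simp [rectF, hc]
      rw [hcard] at hle
      omega
    · push_neg at hk
      -- relabel rows and columns to bring A inside the core [0,c)²
      have hac : a ≤ c := Nat.le_mul_of_pos_right a hb
      have hbc : b ≤ c := Nat.le_mul_of_pos_left b ha
      set s := A.image Prod.fst with hsdef
      set u := A.image Prod.snd with hudef
      have hscard : s.card ≤ A.card := Finset.card_image_le
      have hucard : u.card ≤ A.card := Finset.card_image_le
      have hsn : s ⊆ Finset.range n := by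
        intro x hx
        obtain ⟨q, hq, rfl⟩ := Finset.mem_image.1 hx
        exact Finset.mem_range.2 (mem_rectF.1 (hAr hq)).1
      have hum : u ⊆ Finset.range m := by
        intro x hx
        obtain ⟨q, hq, rfl⟩ := Finset.mem_image.1 hx
        exact Finset.mem_range.2 (mem_rectF.1 (hAr hq)).2
      obtain ⟨t1, ht1sub, ht1card⟩ :=
        Finset.exists_subset_card_eq (s := Finset.range c) (n := s.card)
          (by rw [Finset.card_range]; omega)
      obtain ⟨t2, ht2sub, ht2card⟩ :=
        Finset.exists_subset_card_eq (s := Finset.range c) (n := u.card)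
          (by rw [Finset.card_range]; omega)
      have ht1n : t1 ⊆ Finset.range n :=
        ht1sub.trans (Finset.range_subset_range.2 (by omega))
      have ht2m : t2 ⊆ Finset.range m :=
        ht2sub.trans (Finset.range_subset_range.2 (by omega))
      obtain ⟨σ, hσmap, hσrange⟩ := exists_perm_into n s.card s t1 rfl ht1card hsn ht1n
      obtain ⟨τ, hτmap, hτrange⟩ := exists_perm_into m u.card u t2 rfl ht2card hum ht2m
      set A1 := A.map (pairEmb σ τ) with hA1
      have hA1core : A1 ⊆ rectF c c := by
        intro p hp
        obtain ⟨q, hq, rfl⟩ := Finset.mem_map.1 hp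
        rw [pairEmb_apply]
        refine mem_rectF.2 ⟨?_, ?_⟩
        · exact Finset.mem_range.1 (ht1sub (hσmap q.1 (Finset.mem_image_of_mem Prod.fst hq)))
        · exact Finset.mem_range.1 (ht2sub (hτmap q.2 (Finset.mem_image_of_mem Prod.snd hq)))
      have hA1span : (growthStep Z n m)^[L] A1 = rectF n m :=
        (span_map_iff hσrange hτrange A L).2 hAspan
      have hspan' : (growthStep Z n' m')^[L] A1 = rectF n' m' := by
        rw [psi_span_iff hZab hZdc hac hbc hA1core (by omega) (by omega) L]
        rw [← psi_span_iff hZab hZdc hac hbc hA1core (show c < n by omega)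
          (show c < m by omega) L]
        exact hA1span
      have hA1sub : A1 ⊆ rectF n' m' := by
        intro q hq
        have := mem_rectF.1 (hA1core hq)
        exact mem_rectF.2 ⟨by omega, by omega⟩
      have := gammaL_le hA1sub hspan'
      rw [Finset.card_map] at this
      omega


/-- if `Z ⊆ [0,a-1]×[0,b-1]` is downward-closed and `L ≥ 2`, then
`γ^L(Z,m,n)` is the same for all `m, n > ab`. -/
theorem stmt_19 (Z : Set (ℕ × ℕ))
    (hZdc : ∀ p ∈ Z, ∀ q : ℕ × ℕ, q.1 ≤ p.1 → q.2 ≤ p.2 → q ∈ Z)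
    (a b : ℕ) (hZab : Z ⊆ {p : ℕ × ℕ | p.1 < a ∧ p.2 < b})
    (L : ℕ) (hL : 2 ≤ L)
    (m n m' n' : ℕ) (hm : a * b < m) (hn : a * b < n)
    (hm' : a * b < m') (hn' : a * b < n') :
    gammaL Z L m n = gammaL Z L m' n' :=
  le_antisymm (gamma_mono Z hZdc a b hZab L hL m' n' m n hm' hn' hm hn)
    (gamma_mono Z hZdc a b hZab L hL m n m' n' hm hn hm' hn')
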